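/- arXiv:2407.11328 — 7 statements merged into one kernel-verified Lean document; each statement's English description precedes it below -/
import Mathlib

section
/- Let X₁ and X₂ be degree-similar finite simple graphs and let d be a natural number. For i ∈ {1,2} let Vᵢ = {w ∈ V(Xᵢ) : deg_{Xᵢ}(w) = d}. Then the induced subgraphs X₁[V₁] and X₂[V₂] are adjacency cospectral, i.e., the characteristic polynomials of the adjacency matrices A(X₁[V₁]) and A(X₂[V₂]) are equal. -/
/-!
Write `P_S` for the diagonal 0/1 matrix projecting onto the coordinates in `S`. Entrywise,
`D₁ M = M D₂` says that `M` only links vertices of equal degree, so `M` also conjugates `f(D₁)`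
to `f(D₂)` for every function `f`; in particular it conjugates `P_{S₁}` to `P_{S₂}`, where `Sᵢ` is
the set of degree-`d` vertices of `Xᵢ`. Hence `P_{S₁} A₁ P_{S₁}` and `P_{S₂} A₂ P_{S₂}` are similar.
The characteristic polynomial of `P_S A P_S` is that of `A[S]` times `X ^ #Sᶜ`, and
`#S₁ = tr P_{S₁} = tr P_{S₂} = #S₂`, so the factors `X ^ #Sᵢᶜ` cancel.
-/

open Matrix

open Classical in
noncomputable def adjMat {V : Type*} (G : SimpleGraph V) : Matrix V V ℝ :=
  Matrix.of fun a b => if G.Adj a b then 1 else 0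

noncomputable def gdeg {V : Type*} (G : SimpleGraph V) (v : V) : ℕ :=
  Nat.card (G.neighborSet v)

noncomputable def degMat {V : Type*} [DecidableEq V] (G : SimpleGraph V) : Matrix V V ℝ :=
  Matrix.diagonal fun v => (gdeg G v : ℝ)

/-- Two graphs (on possibly different vertex types of the same cardinality) are
degree similar if there is an invertible real matrix conjugating the adjacency
matrix of the first to that of the second, and likewise for the degree matrices. -/
def DegreeSimilar {V W : Type*} [Fintype V] [Fintype W] [DecidableEq V] [DecidableEq W]
    (G : SimpleGraph V) (H : SimpleGraph W) : Prop :=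
  ∃ (e : V ≃ W) (M : Matrix V V ℝ), IsUnit M ∧
    M⁻¹ * adjMat G * M = (adjMat H).submatrix ⇑e ⇑e ∧
    M⁻¹ * degMat G * M = (degMat H).submatrix ⇑e ⇑e

open Polynomial

namespace Matrix

variable {n R : Type*} [DecidableEq n] [CommRing R]

theorem charpoly_submatrix_preimage {m : Type*} [Fintype m] [DecidableEq m] (e : m ≃ n)
    (B : Matrix n n R) (S : Set n) [Fintype S] [Fintype (e ⁻¹' S)] :
    ((B.submatrix e e).submatrix ((↑) : e ⁻¹' S → m) (↑)).charpoly =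
      (B.submatrix ((↑) : S → n) (↑)).charpoly :=
  charpoly_reindex (e.subtypeEquiv fun _ => Iff.rfl : e ⁻¹' S ≃ S).symm
    (B.submatrix ((↑) : S → n) (↑))

variable [Fintype n]

theorem charpoly_conj' {M : Matrix n n R} (hM : IsUnit M) (N : Matrix n n R) :
    (M⁻¹ * N * M).charpoly = N.charpoly := by
  rw [← hM.unit_spec, charpoly_units_conj']

theorem inv_mul_mul_eq_iff_mul_eq_mul {M : Matrix n n R} (hM : IsUnit M) (A B : Matrix n n R) :
    M⁻¹ * A * M = B ↔ A * M = M * B := by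
  have hdet := (isUnit_iff_isUnit_det M).1 hM
  constructor
  · rintro rfl
    rw [← mul_assoc, ← mul_assoc, mul_nonsing_inv _ hdet, one_mul]
  · intro h
    rw [mul_assoc, h, ← mul_assoc, nonsing_inv_mul _ hdet, one_mul]

theorem conj_diagonal_comp [NoZeroDivisors R] {M : Matrix n n R} (hM : IsUnit M) {d₁ d₂ : n → R}
    (h : M⁻¹ * diagonal d₁ * M = diagonal d₂) (f : R → R) :
    M⁻¹ * diagonal (f ∘ d₁) * M = diagonal (f ∘ d₂) := by
  rw [inv_mul_mul_eq_iff_mul_eq_mul hM] at h ⊢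
  ext u v
  have huv := congrFun₂ h u v
  simp only [diagonal_mul, mul_diagonal, Function.comp_apply] at huv ⊢
  by_cases hMuv : M u v = 0
  · simp [hMuv]
  · rw [mul_comm] at huv
    rw [mul_left_cancel₀ hMuv huv, mul_comm]

theorem charpoly_diagonal_indicator_mul_mul (S : Set n) [DecidablePred (· ∈ S)]
    (A : Matrix n n R) :
    (diagonal (S.indicator 1) * A * diagonal (S.indicator 1)).charpoly =
      (A.submatrix ((↑) : S → n) (↑)).charpoly * X ^ Fintype.card ↥Sᶜ := by
  have hblocks : reindex (Equiv.sumCompl (· ∈ S)).symm (Equiv.sumCompl (· ∈ S)).symm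
      (diagonal (S.indicator 1) * A * diagonal (S.indicator 1)) =
        fromBlocks (A.submatrix ((↑) : S → n) (↑)) 0 0 0 := by
    ext (i | i) (j | j) <;> simp [diagonal_mul, mul_diagonal, i.2, j.2]
  rw [← charpoly_reindex (Equiv.sumCompl (· ∈ S)).symm, hblocks, charpoly_fromBlocks_zero₂₁,
    charpoly_zero]
  rfl

theorem trace_diagonal_indicator (S : Set n) [Fintype S] :
    trace (diagonal (S.indicator (1 : n → R))) = Fintype.card S := by
  classical
  simp [trace_diagonal, Set.indicator_apply, Finset.sum_boole, Fintype.card_subtype]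

theorem charpoly_submatrix_eq_of_conj_diagonal_indicator [CharZero R] {M A₁ A₂ : Matrix n n R}
    (hM : IsUnit M) (hA : M⁻¹ * A₁ * M = A₂) {S₁ S₂ : Set n} [DecidablePred (· ∈ S₁)]
    [DecidablePred (· ∈ S₂)]
    (hS : M⁻¹ * diagonal (S₁.indicator 1) * M = diagonal (S₂.indicator 1)) :
    (A₁.submatrix ((↑) : S₁ → n) (↑)).charpoly = (A₂.submatrix ((↑) : S₂ → n) (↑)).charpoly := by
  have hcompress : M⁻¹ * (diagonal (S₁.indicator 1) * A₁ * diagonal (S₁.indicator 1)) * M =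
      diagonal (S₂.indicator 1) * A₂ * diagonal (S₂.indicator 1) := by
    have hdet := (isUnit_iff_isUnit_det M).1 hM
    rw [← hA, ← hS]
    simp only [mul_assoc, mul_nonsing_inv_cancel_left _ _ hdet]
  have hcard : Fintype.card ↥S₁ᶜ = Fintype.card ↥S₂ᶜ := by
    have : (Fintype.card S₁ : R) = Fintype.card S₂ := by
      rw [← trace_diagonal_indicator, ← trace_diagonal_indicator, ← hS, trace_conj' hM]
    rw [Fintype.card_compl_set, Fintype.card_compl_set, Nat.cast_injective this]
  apply (isRegular_X_pow (Fintype.card ↥S₁ᶜ)).right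
  dsimp only
  rw [← charpoly_diagonal_indicator_mul_mul, hcard, ← charpoly_diagonal_indicator_mul_mul,
    ← hcompress, charpoly_conj' hM]

end Matrix

open Classical in
theorem adjMat_induce {V : Type*} (G : SimpleGraph V) (S : Set V) :
    adjMat (G.induce S) = (adjMat G).submatrix ((↑) : S → V) (↑) := by
  ext a b
  simp [adjMat]

open Classical in
/-- If `X₁` and `X₂` are degree-similar graphs and `d` is a natural number, then the
induced subgraphs on the sets of vertices of degree `d` are adjacency cospectral. -/
theorem degreeSimilar_induce_charpoly {V : Type*} [Fintype V] [DecidableEq V]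
    (X₁ X₂ : SimpleGraph V) (h : DegreeSimilar X₁ X₂) (d : ℕ) :
    Matrix.charpoly (adjMat (X₁.induce {w | gdeg X₁ w = d}))
      = Matrix.charpoly (adjMat (X₂.induce {w | gdeg X₂ w = d})) := by
  obtain ⟨e, M, hM, hA, hD⟩ := h
  have hdeg (G : SimpleGraph V) :
      ({(d : ℝ)} : Set ℝ).indicator (1 : ℝ → ℝ) ∘ (fun v => (gdeg G v : ℝ)) =
        {w | gdeg G w = d}.indicator 1 := by
    ext v
    simp only [Function.comp_apply, Set.indicator_apply, Set.mem_singleton_iff, Set.mem_ofPred_eq,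
      Nat.cast_inj, Pi.one_apply]
  have hS : M⁻¹ * diagonal ({w | gdeg X₁ w = d}.indicator 1) * M =
      diagonal ((e ⁻¹' {w | gdeg X₂ w = d}).indicator 1) := by
    rw [degMat, degMat, submatrix_diagonal_equiv] at hD
    have := conj_diagonal_comp hM hD (({(d : ℝ)} : Set ℝ).indicator 1)
    rwa [hdeg, ← Function.comp_assoc, hdeg] at this
  rw [adjMat_induce, adjMat_induce, ← charpoly_submatrix_preimage e (adjMat X₂)]
  convert charpoly_submatrix_eq_of_conj_diagonal_indicator hM hA hS
end

section
/- Let X and Y be finite simple graphs on n vertices with X connected, and let M be an invertible real n×n matrix such that M⁻¹A(X)M = A(Y) and M⁻¹D(X)M = D(Y). Then M⁻¹J_nM = J_n, where J_n is the n×n all-ones matrix. -/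
/-! Passing to Laplacians `L = D - A`, `M` conjugates `L(X)` to `L(Y)`. As `L(Y)` kills `J` on both
sides, `K = M J M⁻¹` is killed on both sides by `L(X)`. For connected `X` the kernel of `L(X)`
consists of the constant vectors, so `K` is a constant matrix, and `tr K = tr J` forces `K = J`. -/

open Matrix

namespace SimpleGraph

variable {V : Type*} [Fintype V] [DecidableEq V] (G : SimpleGraph V) [DecidableRel G.Adj]

lemma lapMatrix_eq_degMat_sub_adjMat : G.lapMatrix ℝ = degMat G - adjMat G := by
  have hdeg : ∀ v, (gdeg G v : ℝ) = G.degree v := fun v => by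
    rw [gdeg, Nat.card_eq_fintype_card, card_neighborSet_eq_degree]
  ext i j
  simp [lapMatrix, degMatrix, degMat, adjMat, adjMatrix, hdeg]

lemma lapMatrix_mul_allOnes {R : Type*} [Ring R] :
    G.lapMatrix R * of (fun _ _ => (1 : R)) = 0 := by
  ext i j
  simpa [mul_apply, mulVec, dotProduct] using
    congrFun (G.lapMatrix_mulVec_const_eq_zero (R := R)) i

lemma allOnes_mul_lapMatrix {R : Type*} [CommRing R] :
    of (fun _ _ => (1 : R)) * G.lapMatrix R = 0 := by
  have hJ : (of fun _ _ => (1 : R) : Matrix V V R)ᵀ = of fun _ _ => 1 := rfl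
  rw [← hJ, ← (G.isSymm_lapMatrix R).eq, ← transpose_mul, lapMatrix_mul_allOnes, transpose_zero]

variable {G}

lemma Connected.apply_eq_of_lapMatrix_mul_eq_zero (hG : G.Connected) {W : Type*}
    {N : Matrix V W ℝ} (hN : G.lapMatrix ℝ * N = 0) (i i' : V) (j : W) : N i j = N i' j := by
  have hcol : G.lapMatrix ℝ *ᵥ (fun k => N k j) = 0 := funext fun k => congrFun (congrFun hN k) j
  exact (lapMatrix_mulVec_eq_zero_iff_forall_reachable G).mp hcol i i' (hG.preconnected i i')

lemma Connected.exists_eq_const_of_lapMatrix_mul_eq_zero (hG : G.Connected) {N : Matrix V V ℝ}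
    (hleft : G.lapMatrix ℝ * N = 0) (hright : N * G.lapMatrix ℝ = 0) :
    ∃ k : ℝ, N = of fun _ _ => k := by
  have hrows : G.lapMatrix ℝ * Nᵀ = 0 := by
    rw [← (G.isSymm_lapMatrix ℝ).eq, ← transpose_mul, hright, transpose_zero]
  obtain ⟨v⟩ := hG.nonempty
  refine ⟨N v v, ext fun i j => ?_⟩
  rw [of_apply, hG.apply_eq_of_lapMatrix_mul_eq_zero hleft i v j]
  exact hG.apply_eq_of_lapMatrix_mul_eq_zero hrows j v v

end SimpleGraph

open SimpleGraph

/-- If `X` is connected and `M` conjugates `A(X), D(X)` to `A(Y), D(Y)`, then `M`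
also conjugates the all-ones matrix to itself. -/
theorem conj_allOnes {V : Type*} [Fintype V] [DecidableEq V]
    (X Y : SimpleGraph V) (hX : X.Connected) (M : Matrix V V ℝ) (hM : IsUnit M)
    (hA : M⁻¹ * adjMat X * M = adjMat Y) (hD : M⁻¹ * degMat X * M = degMat Y) :
    M⁻¹ * (Matrix.of fun _ _ => (1 : ℝ)) * M = Matrix.of fun _ _ => (1 : ℝ) := by
  classical
  obtain ⟨_⟩ := hM.nonempty_invertible
  set J : Matrix V V ℝ := of fun _ _ => 1
  have hL : M⁻¹ * X.lapMatrix ℝ * M = Y.lapMatrix ℝ := by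
    simp only [lapMatrix_eq_degMat_sub_adjMat, Matrix.mul_sub, Matrix.sub_mul, hA, hD]
  have hleft : X.lapMatrix ℝ * (M * J * M⁻¹) = 0 := calc
    _ = M * (M⁻¹ * X.lapMatrix ℝ * M) * J * M⁻¹ := by
      simp only [Matrix.mul_assoc, mul_inv_cancel_left_of_invertible]
    _ = 0 := by rw [hL, Matrix.mul_assoc M, lapMatrix_mul_allOnes]; simp
  have hright : M * J * M⁻¹ * X.lapMatrix ℝ = 0 := calc
    _ = M * (J * (M⁻¹ * X.lapMatrix ℝ * M)) * M⁻¹ := by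
      simp only [Matrix.mul_assoc, mul_inv_of_invertible, Matrix.mul_one]
    _ = 0 := by rw [hL, allOnes_mul_lapMatrix]; simp
  obtain ⟨k, hk⟩ := hX.exists_eq_const_of_lapMatrix_mul_eq_zero hleft hright
  have htr : trace (M * J * M⁻¹) = trace J := by
    rw [trace_mul_cycle, inv_mul_of_invertible, Matrix.one_mul]
  have hk1 : k = 1 := by
    have := hX.nonempty
    simpa [hk, J, trace] using htr
  calc M⁻¹ * J * M = M⁻¹ * (M * J * M⁻¹) * M := by rw [hk, hk1]
    _ = J := by
      simp only [Matrix.mul_assoc, inv_mul_cancel_left_of_invertible, inv_mul_of_invertible,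
        Matrix.mul_one]
end

section
/- Let X and Y be finite simple graphs on the same number of vertices with X connected. If X and Y are degree similar, then their complements X̄ and Ȳ are degree similar. -/
open Matrix

/-!
Degree similarity by `M` makes `M` conjugate the Laplacian `L(X) = D(X) - A(X)` to `L(Y)`. So
`M` maps the all-ones vector `𝟙 ∈ ker L(Y)` into `ker L(X) = ℝ𝟙` (as `X` is connected), and since
Laplacians are symmetric, `𝟙ᵀM⁻¹` is likewise a multiple of `𝟙ᵀ`. Comparing `𝟙ᵀM⁻¹M𝟙 = n` shows
that `M` commutes with the all-ones matrix `J`. As `A(X̄) = J - I - A(X)` and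
`D(X̄) = (n - 1)I - D(X)`, the same `M` conjugates the complements.
-/

namespace Matrix

variable {V K : Type*} [Fintype V] [DecidableEq V] [Field K]

theorem inv_mul_one_mul {M : Matrix V V K} (hM : IsUnit M) : M⁻¹ * 1 * M = 1 := by
  rw [Matrix.mul_one, nonsing_inv_mul _ ((isUnit_iff_isUnit_det M).mp hM)]

theorem inv_mul_of_one_mul_eq_of_one [CharZero K] [Nonempty V] {M : Matrix V V K}
    (hM : IsUnit M) {c d : K} (hc : M *ᵥ 1 = c • 1) (hd : 1 ᵥ* M⁻¹ = d • 1) :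
    M⁻¹ * of 1 * M = of 1 := by
  have hdet : IsUnit M.det := (isUnit_iff_isUnit_det M).mp hM
  have hJ : (of 1 : Matrix V V K) = vecMulVec 1 1 := by ext; simp [vecMulVec_apply]
  have hx : c • (M⁻¹ *ᵥ 1) = 1 := by
    rw [← mulVec_smul, ← hc, mulVec_mulVec, nonsing_inv_mul _ hdet, one_mulVec]
  have hy : d • (1 ᵥ* M) = 1 := by
    rw [← smul_vecMul, ← hd, vecMul_vecMul, nonsing_inv_mul _ hdet, vecMul_one]
  have hcd : c * d = 1 := by
    have key : (1 ᵥ* M⁻¹) ⬝ᵥ (M *ᵥ 1) = (1 : V → K) ⬝ᵥ 1 := by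
      rw [← dotProduct_mulVec, mulVec_mulVec, nonsing_inv_mul _ hdet, one_mulVec]
    have hn : ((1 : V → K) ⬝ᵥ 1) ≠ 0 := by simp
    rw [hc, hd, smul_dotProduct, dotProduct_smul, smul_eq_mul, smul_eq_mul] at key
    exact (mul_eq_right₀ hn).mp (by linear_combination key)
  calc M⁻¹ * of 1 * M = vecMulVec (M⁻¹ *ᵥ 1) (1 ᵥ* M) := by
        rw [hJ, mul_vecMulVec, vecMulVec_mul]
    _ = vecMulVec (c • (M⁻¹ *ᵥ 1)) (d • (1 ᵥ* M)) := by
        rw [smul_vecMulVec, vecMulVec_smul, smul_smul, hcd, one_smul]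
    _ = of 1 := by rw [hx, hy, hJ]

theorem inv_mul_of_one_mul_eq_of_one_of_conj [CharZero K] [Nonempty V] {P Q M : Matrix V V K}
    (hP : P.IsSymm) (hQ : Q.IsSymm) (hker : ∀ x, P *ᵥ x = 0 → ∃ a : K, x = a • 1)
    (hQ1 : Q *ᵥ 1 = 0) (hM : IsUnit M) (hPQ : M⁻¹ * P * M = Q) :
    M⁻¹ * of 1 * M = of 1 := by
  have hdet : IsUnit M.det := (isUnit_iff_isUnit_det M).mp hM
  have hPM : P * M = M * Q := by
    rw [← hPQ, ← Matrix.mul_assoc, ← Matrix.mul_assoc, mul_nonsing_inv _ hdet, Matrix.one_mul]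
  have hinvP : M⁻¹ * P = Q * M⁻¹ := by
    rw [← hPQ, Matrix.mul_assoc, mul_nonsing_inv _ hdet, Matrix.mul_one]
  obtain ⟨c, hc⟩ := hker (M *ᵥ 1) <| by
    rw [mulVec_mulVec, hPM, ← mulVec_mulVec, hQ1, mulVec_zero]
  obtain ⟨d, hd⟩ := hker (1 ᵥ* M⁻¹) <| by
    rw [← vecMul_transpose, hP.eq, vecMul_vecMul, hinvP, ← vecMul_vecMul, ← hQ.eq,
      vecMul_transpose, hQ1, zero_vecMul]
  exact inv_mul_of_one_mul_eq_of_one hM hc hd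

end Matrix

section Graph

variable {V W : Type*}

theorem adjMat_eq_adjMatrix (G : SimpleGraph V) [DecidableRel G.Adj] :
    adjMat G = G.adjMatrix ℝ := by
  ext i j
  simp only [adjMat, SimpleGraph.adjMatrix_apply, of_apply]
  congr

theorem gdeg_eq_degree [Fintype V] (G : SimpleGraph V) [DecidableRel G.Adj] (v : V) :
    gdeg G v = G.degree v := by
  rw [gdeg, Nat.card_eq_fintype_card, SimpleGraph.card_neighborSet_eq_degree]

theorem degMat_eq_degMatrix [Fintype V] [DecidableEq V] (G : SimpleGraph V) [DecidableRel G.Adj] :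
    degMat G = G.degMatrix ℝ := by
  simp only [degMat, SimpleGraph.degMatrix, gdeg_eq_degree]

theorem adjMat_comap (f : V → W) (H : SimpleGraph W) :
    adjMat (H.comap f) = (adjMat H).submatrix f f :=
  rfl

theorem gdeg_comap (e : V ≃ W) (H : SimpleGraph W) (v : V) :
    gdeg (H.comap e) v = gdeg H (e v) :=
  Nat.card_congr (e.subtypeEquiv fun _ => Iff.rfl)

theorem degMat_comap [DecidableEq V] [DecidableEq W] (e : V ≃ W) (H : SimpleGraph W) :
    degMat (H.comap e) = (degMat H).submatrix e e := by
  simp only [degMat, submatrix_diagonal_equiv, gdeg_comap, Function.comp_def]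

theorem SimpleGraph.comap_compl {f : V → W} (hf : f.Injective) (H : SimpleGraph W) :
    Hᶜ.comap f = (H.comap f)ᶜ := by
  ext u v
  simp [hf.ne_iff]

theorem adjMat_compl [DecidableEq V] (G : SimpleGraph V) :
    adjMat Gᶜ = of 1 - 1 - adjMat G := by
  ext i j
  by_cases hij : i = j
  · subst hij
    simp [adjMat]
  · by_cases h : G.Adj i j <;> simp [adjMat, one_apply_ne hij, hij, h]

theorem degMat_compl [Fintype V] [DecidableEq V] (G : SimpleGraph V) :
    degMat Gᶜ = ((Fintype.card V : ℝ) - 1) • 1 - degMat G := by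
  classical
  rw [degMat_eq_degMatrix, degMat_eq_degMatrix, SimpleGraph.degMatrix, SimpleGraph.degMatrix,
    smul_one_eq_diagonal, diagonal_sub]
  congr 1
  ext v
  have hlt := G.degree_lt_card_verts v
  rw [SimpleGraph.degree_compl, Nat.cast_sub (by omega), Nat.cast_sub (by omega)]
  simp

theorem SimpleGraph.Connected.exists_eq_smul_one_of_lapMatrix_mulVec_eq_zero
    {G : SimpleGraph V} [Fintype V] [DecidableEq V] [DecidableRel G.Adj] (hG : G.Connected)
    {x : V → ℝ} (hx : G.lapMatrix ℝ *ᵥ x = 0) : ∃ a : ℝ, x = a • 1 := by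
  obtain ⟨v⟩ := hG.nonempty
  refine ⟨x v, funext fun u => ?_⟩
  simpa using (G.lapMatrix_mulVec_eq_zero_iff_forall_reachable.mp hx) u v (hG.preconnected u v)

variable [Fintype V] [DecidableEq V] {G H : SimpleGraph V} {M : Matrix V V ℝ}

theorem inv_mul_lapMatrix_mul [DecidableRel G.Adj] [DecidableRel H.Adj]
    (hA : M⁻¹ * adjMat G * M = adjMat H) (hD : M⁻¹ * degMat G * M = degMat H) :
    M⁻¹ * G.lapMatrix ℝ * M = H.lapMatrix ℝ := by
  rw [SimpleGraph.lapMatrix, Matrix.mul_sub, Matrix.sub_mul, ← adjMat_eq_adjMatrix,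
    ← degMat_eq_degMatrix, hA, hD, adjMat_eq_adjMatrix, degMat_eq_degMatrix,
    SimpleGraph.lapMatrix]

theorem inv_mul_adjMat_compl_mul (hG : G.Connected) (hM : IsUnit M)
    (hA : M⁻¹ * adjMat G * M = adjMat H) (hD : M⁻¹ * degMat G * M = degMat H) :
    M⁻¹ * adjMat Gᶜ * M = adjMat Hᶜ := by
  classical
  have : Nonempty V := hG.nonempty
  have hJ : M⁻¹ * of 1 * M = of 1 :=
    inv_mul_of_one_mul_eq_of_one_of_conj (G.isSymm_lapMatrix ℝ) (H.isSymm_lapMatrix ℝ)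
      (fun _ => hG.exists_eq_smul_one_of_lapMatrix_mulVec_eq_zero)
      H.lapMatrix_mulVec_const_eq_zero hM (inv_mul_lapMatrix_mul hA hD)
  rw [adjMat_compl, adjMat_compl, Matrix.mul_sub, Matrix.mul_sub, Matrix.sub_mul, Matrix.sub_mul,
    hJ, inv_mul_one_mul hM, hA]

theorem inv_mul_degMat_compl_mul (hM : IsUnit M) (hD : M⁻¹ * degMat G * M = degMat H) :
    M⁻¹ * degMat Gᶜ * M = degMat Hᶜ := by
  rw [degMat_compl, degMat_compl, Matrix.mul_sub, Matrix.sub_mul, Matrix.mul_smul,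
    Matrix.smul_mul, inv_mul_one_mul hM, hD]

end Graph

/-- If `X` is connected and `X`, `Y` are degree similar, then their complements are
degree similar. -/
theorem degreeSimilar_compl {V : Type*} [Fintype V] [DecidableEq V]
    (X Y : SimpleGraph V) (hX : X.Connected) (h : DegreeSimilar X Y) :
    DegreeSimilar Xᶜ Yᶜ := by
  obtain ⟨e, M, hM, hA, hD⟩ := h
  rw [← adjMat_comap] at hA
  rw [← degMat_comap] at hD
  refine ⟨e, M, hM, ?_, ?_⟩
  · rw [← adjMat_comap, SimpleGraph.comap_compl e.injective]
    exact inv_mul_adjMat_compl_mul hX hM hA hD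
  · rw [← degMat_comap, SimpleGraph.comap_compl e.injective]
    exact inv_mul_degMat_compl_mul hM hD
end

section
/- Let X be a finite simple graph and let V(X) = C₁ ∪ C₂ ∪ ⋯ ∪ C_k ∪ C be a partition of its vertex set; put c := |C| and cᵢ := |Cᵢ|. Suppose that (a) for all 1 ≤ i,j ≤ k there is a number d_{ij} such that every vertex of Cᵢ has exactly d_{ij} neighbors in C_j; (b) every vertex of C has exactly cᵢ/2 neighbors in Cᵢ, for each i; and (c) every vertex of Cᵢ has exactly c/2 neighbors in C, for each i. Let X^π be the graph on V(X) in which a vertex v ∈ C and a vertex w ∈ Cᵢ (1 ≤ i ≤ k) are adjacent iff they are not adjacent in X, and all other pairs of vertices are adjacent iff they are adjacent in X. Then X and X^π are degree similar. -/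
open Matrix

/-- The graph obtained from `X` by local switching with respect to the special part `C0`:
a pair with exactly one endpoint in `C0` is adjacent iff it was NOT adjacent in `X`,
and every other pair is adjacent iff it was adjacent in `X`. -/
def switched {V : Type*} (X : SimpleGraph V) (C0 : Set V) : SimpleGraph V :=
  SimpleGraph.fromRel fun a b =>
    (((a ∈ C0 ∧ b ∉ C0) ∨ (a ∉ C0 ∧ b ∈ C0)) ∧ ¬ X.Adj a b) ∨
    (¬ ((a ∈ C0 ∧ b ∉ C0) ∨ (a ∉ C0 ∧ b ∈ C0)) ∧ X.Adj a b)

/-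
Let `P` average a vector over each cell `Cᵢ` and keep its entries on `C`, i.e. `P` is the
orthogonal projection onto the vectors constant on the cells of the partition of `V` into the
`Cᵢ` and the singletons of `C`; then `M = 2P - 1` is an involution. Computing `A(X) M` and
`M A(X^π) = (A(X^π) M)ᵀ` column by column, condition (b) settles the pairs with one end in `C`,
and the double count `cᵢ dᵢⱼ = cⱼ dⱼᵢ` of the edges between `Cᵢ` and `Cⱼ` the pairs inside
`V \ C`, so `A(X) M = M A(X^π)`. By (a) and (c) the degree vector of `X` is constant on every
`Cᵢ`, hence fixed by `M`, and `M` commutes with `D(X)`. As `M` also fixes the all-ones vector,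
the degree vector `A(X^π) 1 = M A(X) M 1` of `X^π` equals that of `X`.
-/

open Finset

section BlockAverage

variable {V β : Type*} [Fintype V] [DecidableEq β] (q : V → β)

noncomputable def blockAverage : Matrix V V ℝ :=
  of fun u v => if q u = q v then (#{w | q w = q u} : ℝ)⁻¹ else 0

theorem blockAverage_apply_comm (u v : V) : blockAverage q u v = blockAverage q v u := by
  by_cases h : q u = q v <;> simp [blockAverage, h, eq_comm]

theorem blockAverage_transpose : (blockAverage q)ᵀ = blockAverage q :=
  Matrix.ext fun u v => blockAverage_apply_comm q v u

theorem mul_blockAverage_apply (N : Matrix V V ℝ) (u v : V) :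
    (N * blockAverage q) u v = (∑ w ∈ {w | q w = q v}, N u w) / #{w | q w = q v} := by
  rw [mul_apply, sum_div, sum_filter]
  refine sum_congr rfl fun w _ => ?_
  split_ifs with h <;> simp [blockAverage, h, div_eq_mul_inv]

theorem blockAverage_mulVec {x : V → ℝ} (hx : ∀ u v, q u = q v → x u = x v) :
    blockAverage q *ᵥ x = x := by
  ext u
  have hpos : (0 : ℝ) < #{w | q w = q u} := by exact_mod_cast card_pos.2 ⟨u, by simp⟩
  have hrow : ∀ w, blockAverage q u w * x w
      = if q w = q u then (#{w | q w = q u} : ℝ)⁻¹ * x u else 0 := fun w => by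
    by_cases h : q w = q u
    · simp [blockAverage, h, hx w u h]
    · simp [blockAverage, h, Ne.symm h]
  rw [mulVec, dotProduct, sum_congr rfl fun w _ => hrow w, ← sum_filter, sum_const,
    nsmul_eq_mul, ← mul_assoc, mul_inv_cancel₀ hpos.ne', one_mul]

theorem blockAverage_mul_self : blockAverage q * blockAverage q = blockAverage q := by
  ext u v
  have hcol : ∀ w w', q w = q w' → blockAverage q w v = blockAverage q w' v := fun w w' h => by
    simp [blockAverage, h]
  exact congrFun (blockAverage_mulVec q hcol) u

theorem diagonal_mul_blockAverage [DecidableEq V] {d : V → ℝ}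
    (hd : ∀ u v, q u = q v → d u = d v) :
    diagonal d * blockAverage q = blockAverage q * diagonal d := by
  ext u v
  rw [diagonal_mul, mul_diagonal]
  by_cases h : q u = q v
  · rw [hd u v h, mul_comm]
  · simp [blockAverage, h]

end BlockAverage

section BlockReflection

variable {V β : Type*} [Fintype V] [DecidableEq V] [DecidableEq β] (q : V → β)

noncomputable def blockReflection : Matrix V V ℝ := 2 • blockAverage q - 1

theorem blockReflection_mul_self : blockReflection q * blockReflection q = 1 := by
  simp only [blockReflection, sub_mul, mul_sub, smul_mul_assoc, mul_smul_comm,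
    blockAverage_mul_self, mul_one, one_mul]
  module

theorem blockReflection_transpose : (blockReflection q)ᵀ = blockReflection q := by
  rw [blockReflection, transpose_sub, transpose_smul, transpose_one, blockAverage_transpose]

theorem blockReflection_mulVec {x : V → ℝ} (hx : ∀ u v, q u = q v → x u = x v) :
    blockReflection q *ᵥ x = x := by
  rw [blockReflection, sub_mulVec, smul_mulVec, blockAverage_mulVec q hx, one_mulVec, two_smul,
    add_sub_cancel_right]

theorem diagonal_mul_blockReflection {d : V → ℝ} (hd : ∀ u v, q u = q v → d u = d v) :
    diagonal d * blockReflection q = blockReflection q * diagonal d := by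
  simp only [blockReflection, mul_sub, sub_mul, mul_smul_comm, smul_mul_assoc, mul_one, one_mul,
    diagonal_mul_blockAverage q hd]

theorem mul_blockReflection_apply (N : Matrix V V ℝ) (u v : V) :
    (N * blockReflection q) u v
      = 2 * (∑ w ∈ {w | q w = q v}, N u w) / #{w | q w = q v} - N u v := by
  rw [blockReflection, mul_sub, Matrix.mul_smul, mul_one, Matrix.sub_apply, Matrix.smul_apply,
    mul_blockAverage_apply, nsmul_eq_mul, Nat.cast_ofNat, mul_div_assoc]

end BlockReflection

section AdjMat

variable {V : Type*} (G : SimpleGraph V)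

theorem adjMat_apply_comm (u v : V) : adjMat G u v = adjMat G v u := by
  classical
  exact if_congr (G.adj_comm u v) rfl rfl

theorem adjMat_transpose : (adjMat G)ᵀ = adjMat G :=
  Matrix.ext fun u v => adjMat_apply_comm G v u

variable [Fintype V]

theorem sum_adjMat_eq_ncard (s : Set V) [DecidablePred (· ∈ s)] (u : V) :
    ∑ w with w ∈ s, adjMat G u w = (s ∩ G.neighborSet u).ncard := by
  classical
  simp only [adjMat, of_apply, sum_boole, Set.ncard_eq_toFinset_card', Nat.cast_inj]
  congr 1
  ext w
  simp

theorem adjMat_mulVec_one : adjMat G *ᵥ 1 = fun v => (gdeg G v : ℝ) := by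
  ext v
  simpa [mulVec, dotProduct, gdeg, Nat.card_coe_set_eq] using sum_adjMat_eq_ncard G Set.univ v

end AdjMat

theorem ncard_mul_eq_ncard_mul_of_forall_ncard_inter_neighborSet {V : Type*} [Fintype V]
    (G : SimpleGraph V) {s t : Set V} {a b : ℕ}
    (ha : ∀ x ∈ s, (t ∩ G.neighborSet x).ncard = a)
    (hb : ∀ y ∈ t, (s ∩ G.neighborSet y).ncard = b) :
    s.ncard * a = t.ncard * b := by
  classical
  have hcount (r : Set V) (c : ℕ) : ∑ x with x ∈ r, (c : ℝ) = r.ncard * c := by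
    rw [sum_const, nsmul_eq_mul, ← Set.ncard_coe_finset, coe_filter_univ]
    rfl
  have hs : ∑ x with x ∈ s, ∑ y with y ∈ t, adjMat G x y = s.ncard * a := by
    rw [← hcount]
    exact sum_congr rfl fun x hx => by rw [sum_adjMat_eq_ncard, ha x (by simpa using hx)]
  have ht : ∑ y with y ∈ t, ∑ x with x ∈ s, adjMat G y x = t.ncard * b := by
    rw [← hcount]
    exact sum_congr rfl fun y hy => by rw [sum_adjMat_eq_ncard, hb y (by simpa using hy)]
  have hswap : ∑ x with x ∈ s, ∑ y with y ∈ t, adjMat G x y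
      = ∑ y with y ∈ t, ∑ x with x ∈ s, adjMat G y x :=
    sum_comm.trans (sum_congr rfl fun y _ => sum_congr rfl fun x _ => adjMat_apply_comm G x y)
  exact_mod_cast hs.symm.trans (hswap.trans ht)

section Switching

variable {V : Type*} (X : SimpleGraph V) (C0 : Set V) {a b : V}

theorem switched_adj_of_iff (h : a ∈ C0 ↔ b ∈ C0) :
    (switched X C0).Adj a b ↔ X.Adj a b := by
  have := X.adj_comm a b
  have := X.ne_of_adj (a := a) (b := b)
  simp only [switched, SimpleGraph.fromRel_adj]
  tauto

theorem switched_adj_of_not_iff (h : ¬(a ∈ C0 ↔ b ∈ C0)) :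
    (switched X C0).Adj a b ↔ ¬X.Adj a b := by
  have := X.adj_comm a b
  have : a ≠ b := by rintro rfl; exact h Iff.rfl
  simp only [switched, SimpleGraph.fromRel_adj]
  tauto

theorem adjMat_switched_of_iff (h : a ∈ C0 ↔ b ∈ C0) :
    adjMat (switched X C0) a b = adjMat X a b := by
  classical
  exact if_congr (switched_adj_of_iff X C0 h) rfl rfl

theorem adjMat_switched_of_not_iff (h : ¬(a ∈ C0 ↔ b ∈ C0)) :
    adjMat (switched X C0) a b = 1 - adjMat X a b := by
  classical
  simp only [adjMat, of_apply, switched_adj_of_not_iff X C0 h]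
  split_ifs <;> norm_num

variable {s : Set V} {v : V}

theorem inter_neighborSet_switched_of_not_mem (hs : Disjoint s C0) (hv : v ∉ C0) :
    s ∩ (switched X C0).neighborSet v = s ∩ X.neighborSet v :=
  Set.ext fun _ => and_congr_right fun hw =>
    switched_adj_of_iff X C0 (iff_of_false hv (Set.disjoint_left.1 hs hw))

theorem inter_neighborSet_switched_of_mem (hs : Disjoint s C0) (hv : v ∈ C0) :
    s ∩ (switched X C0).neighborSet v = s \ X.neighborSet v :=
  Set.ext fun _ => and_congr_right fun hw =>
    switched_adj_of_not_iff X C0 fun h => Set.disjoint_left.1 hs hw (h.1 hv)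

theorem two_mul_ncard_inter_neighborSet_switched [Finite V] (hs : Disjoint s C0) (hv : v ∈ C0)
    (h : 2 * (s ∩ X.neighborSet v).ncard = s.ncard) :
    2 * (s ∩ (switched X C0).neighborSet v).ncard = s.ncard := by
  have := Set.ncard_inter_add_ncard_sdiff_eq_ncard s (X.neighborSet v)
  rw [inter_neighborSet_switched_of_mem X C0 hs hv]
  omega

end Switching

theorem degreeSimilar_of_adjMat_mul_blockReflection {V β : Type*} [Fintype V] [DecidableEq V]
    [DecidableEq β] {G H : SimpleGraph V} (q : V → β)
    (hA : adjMat G * blockReflection q = blockReflection q * adjMat H)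
    (hdeg : ∀ u v, q u = q v → gdeg G u = gdeg G v) :
    DegreeSimilar G H := by
  set M := blockReflection q
  have hMM : M * M = 1 := blockReflection_mul_self q
  have hMinv : M⁻¹ = M := inv_eq_left_inv hMM
  have hH : M * adjMat G * M = adjMat H := by rw [mul_assoc, hA, ← mul_assoc, hMM, one_mul]
  have hdegR : ∀ u v, q u = q v → (gdeg G u : ℝ) = gdeg G v := fun u v h => by rw [hdeg u v h]
  -- `A_H 1 = M A_G M 1 = M A_G 1`, and `A_G 1` is the degree vector of `G`, fixed by `M`
  have hD : degMat H = degMat G := by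
    have hvec : (fun v => (gdeg H v : ℝ)) = fun v => (gdeg G v : ℝ) := by
      rw [← adjMat_mulVec_one, ← adjMat_mulVec_one, ← hH, ← mulVec_mulVec, ← mulVec_mulVec,
        blockReflection_mulVec q (x := 1) fun _ _ _ => rfl, adjMat_mulVec_one,
        blockReflection_mulVec q hdegR]
    simp only [degMat, hvec]
  refine ⟨Equiv.refl V, M, .of_mul_eq_one M hMM, ?_, ?_⟩
  · rw [Equiv.coe_refl, submatrix_id_id, hMinv, hH]
  · rw [Equiv.coe_refl, submatrix_id_id, hMinv, hD, mul_assoc, degMat,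
      diagonal_mul_blockReflection q hdegR, ← mul_assoc, hMM, one_mul]

section Partition

variable {V ι : Type*} (p : V → Option ι)

/-- The cells of the partition refining that of `p` by splitting `p⁻¹(none)` into singletons. -/
def cellIndex (v : V) : ι ⊕ V := (p v).elim (Sum.inr v) Sum.inl

theorem cellIndex_eq_iff_of_none {v : V} (hv : p v = none) (w : V) :
    cellIndex p w = cellIndex p v ↔ w = v := by
  refine ⟨fun h => ?_, fun h => h ▸ rfl⟩
  cases hw : p w <;> simp_all [cellIndex]

theorem cellIndex_eq_iff_of_some {v : V} {j : ι} (hv : p v = some j) (w : V) :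
    cellIndex p w = cellIndex p v ↔ p w = some j := by
  simp only [cellIndex, hv]
  cases p w <;> simp

variable [Fintype V] [DecidableEq V] [DecidableEq ι] (G : SimpleGraph V) (u : V)

theorem adjMat_mul_blockReflection_cellIndex_of_none {v : V} (hv : p v = none) :
    (adjMat G * blockReflection (cellIndex p)) u v = adjMat G u v := by
  have hfiber : ({w | cellIndex p w = cellIndex p v} : Finset V) = {v} := by
    ext w
    simp [cellIndex_eq_iff_of_none p hv]
  rw [mul_blockReflection_apply, hfiber, sum_singleton, card_singleton]
  ring

theorem adjMat_mul_blockReflection_cellIndex_of_some {v : V} {j : ι} (hv : p v = some j) :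
    (adjMat G * blockReflection (cellIndex p)) u v
      = 2 * ({w | p w = some j} ∩ G.neighborSet u).ncard / {w | p w = some j}.ncard
        - adjMat G u v := by
  have hfiber : ({w | cellIndex p w = cellIndex p v} : Finset V)
      = ({w | p w = some j} : Finset V) := by
    ext w
    simp [cellIndex_eq_iff_of_some p hv]
  rw [mul_blockReflection_apply, hfiber, ← Set.ncard_coe_finset, coe_filter_univ]
  congr 3
  exact sum_adjMat_eq_ncard G {w | p w = some j} u

end Partition

section EquitableSwitching

variable {V ι : Type*} [Fintype V] [DecidableEq ι]
  (X : SimpleGraph V) (p : V → Option ι) {d : ι → ι → ℕ}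

theorem two_mul_gdeg_of_some [Fintype ι]
    (ha : ∀ i j u, p u = some i → ({w | p w = some j} ∩ X.neighborSet u).ncard = d i j)
    (hc : ∀ i u, p u = some i →
      2 * ({w | p w = none} ∩ X.neighborSet u).ncard = {w | p w = none}.ncard)
    {u : V} {i : ι} (hu : p u = some i) :
    2 * gdeg X u = {w | p w = none}.ncard + 2 * ∑ j, d i j := by
  have hsplit : (gdeg X u : ℝ)
      = ∑ a : Option ι, (({w | p w = a} ∩ X.neighborSet u).ncard : ℝ) := by
    rw [← congrFun (adjMat_mulVec_one X) u]
    simp only [mulVec, dotProduct, Pi.one_apply, mul_one]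
    rw [← sum_fiberwise univ p (adjMat X u)]
    exact sum_congr rfl fun a _ => sum_adjMat_eq_ncard X {w | p w = a} u
  rw [Fintype.sum_option] at hsplit
  simp only [ha i _ u hu] at hsplit
  have h0 : (2 * ({w | p w = none} ∩ X.neighborSet u).ncard : ℝ) = {w | p w = none}.ncard := by
    exact_mod_cast hc i u hu
  have : (2 * gdeg X u : ℝ) = {w | p w = none}.ncard + 2 * ∑ j, d i j := by
    rw [hsplit, ← h0]
    push_cast
    ring
  exact_mod_cast this

theorem gdeg_eq_of_cellIndex_eq [Fintype ι]
    (ha : ∀ i j u, p u = some i → ({w | p w = some j} ∩ X.neighborSet u).ncard = d i j)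
    (hc : ∀ i u, p u = some i →
      2 * ({w | p w = none} ∩ X.neighborSet u).ncard = {w | p w = none}.ncard)
    (u v : V) (h : cellIndex p u = cellIndex p v) : gdeg X u = gdeg X v := by
  rcases hv : p v with _ | j
  · rw [(cellIndex_eq_iff_of_none p hv u).1 h]
  · have hu := (cellIndex_eq_iff_of_some p hv u).1 h
    have := (two_mul_gdeg_of_some X p ha hc hu).trans (two_mul_gdeg_of_some X p ha hc hv).symm
    omega

theorem adjMat_mul_blockReflection_cellIndex [DecidableEq V]
    (ha : ∀ i j u, p u = some i → ({w | p w = some j} ∩ X.neighborSet u).ncard = d i j)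
    (hb : ∀ u, p u = none → ∀ i,
      2 * ({w | p w = some i} ∩ X.neighborSet u).ncard = {w | p w = some i}.ncard) :
    adjMat X * blockReflection (cellIndex p)
      = blockReflection (cellIndex p) * adjMat (switched X {w | p w = none}) := by
  set C0 : Set V := {w | p w = none}
  set M := blockReflection (cellIndex p)
  set Y := switched X C0
  have hcard {v : V} {i : ι} (hv : p v = some i) : ({w | p w = some i}.ncard : ℝ) ≠ 0 := by
    exact_mod_cast ((Set.ncard_pos (Set.toFinite {w | p w = some i})).2 ⟨v, hv⟩).ne'
  have hdisj : ∀ i, Disjoint {w | p w = some i} C0 :=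
    fun i => Set.disjoint_left.2 fun w h h' => by simp_all [C0]
  ext u v
  have hMY : (M * adjMat Y) u v = (adjMat Y * M) v u := by
    rw [← transpose_apply (adjMat Y * M), transpose_mul, adjMat_transpose,
      blockReflection_transpose]
  rw [hMY]
  rcases hu : p u with _ | i <;> rcases hv : p v with _ | j
  · rw [adjMat_mul_blockReflection_cellIndex_of_none p X u hv,
      adjMat_mul_blockReflection_cellIndex_of_none p Y v hu,
      adjMat_switched_of_iff X C0 (by simp [C0, hu, hv]), adjMat_apply_comm]
  · rw [adjMat_mul_blockReflection_cellIndex_of_some p X u hv,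
      adjMat_mul_blockReflection_cellIndex_of_none p Y v hu,
      adjMat_switched_of_not_iff X C0 (by simp [C0, hu, hv]), adjMat_apply_comm X v u,
      ← Nat.cast_ofNat, ← Nat.cast_mul, hb u hu j, div_self (hcard hv)]
  · have hbY := two_mul_ncard_inter_neighborSet_switched X C0 (hdisj i) hv (hb v hv i)
    rw [adjMat_mul_blockReflection_cellIndex_of_none p X u hv,
      adjMat_mul_blockReflection_cellIndex_of_some p Y v hu,
      adjMat_switched_of_not_iff X C0 (by simp [C0, hu, hv]), adjMat_apply_comm X v u,
      ← Nat.cast_ofNat, ← Nat.cast_mul, hbY, div_self (hcard hu)]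
    ring
  · have hdouble :
        ({w | p w = some i}.ncard * d i j : ℝ) = {w | p w = some j}.ncard * d j i := by
      exact_mod_cast ncard_mul_eq_ncard_mul_of_forall_ncard_inter_neighborSet X
        (fun x hx => ha i j x hx) (fun y hy => ha j i y hy)
    rw [adjMat_mul_blockReflection_cellIndex_of_some p X u hv,
      adjMat_mul_blockReflection_cellIndex_of_some p Y v hu,
      inter_neighborSet_switched_of_not_mem X C0 (hdisj i) (by simp [C0, hv]),
      adjMat_switched_of_iff X C0 (by simp [C0, hu, hv]), adjMat_apply_comm X v u,
      ha i j u hu, ha j i v hv]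
    field_simp [hcard hu, hcard hv]
    linear_combination 2 * hdouble

end EquitableSwitching

theorem exists_option_index_of_partition {V ι : Type*} {C : ι → Set V} {C0 : Set V}
    (hcover : ∀ x : V, x ∈ C0 ∨ ∃ i, x ∈ C i)
    (hdisj : ∀ i j, i ≠ j → Disjoint (C i) (C j))
    (hdisj0 : ∀ i, Disjoint (C i) C0) :
    ∃ p : V → Option ι, C0 = {w | p w = none} ∧ C = fun i => {w | p w = some i} := by
  classical
  refine ⟨fun v => if h : ∃ i, v ∈ C i then some h.choose else none, ?_, ?_⟩
  · ext v
    simp only [Set.mem_ofPred_eq, dite_eq_right_iff, reduceCtorEq, imp_false, not_exists]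
    exact ⟨fun hv i hi => Set.disjoint_left.1 (hdisj0 i) hi hv,
      fun hv => (hcover v).resolve_right fun ⟨i, hi⟩ => hv i hi⟩
  · ext i v
    simp only [Set.mem_ofPred_eq]
    constructor
    · intro hv
      have h : ∃ i, v ∈ C i := ⟨i, hv⟩
      rw [dif_pos h, Option.some_inj]
      by_contra hne
      exact Set.disjoint_left.1 (hdisj _ _ hne) h.choose_spec hv
    · intro hv
      split_ifs at hv with h
      exact Option.some_inj.1 hv ▸ h.choose_spec

/-- Local switching (Lemma 9 of the paper): if `V(X) = C₁ ∪ ⋯ ∪ C_k ∪ C` is a partition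
such that (a) every vertex of `Cᵢ` has exactly `dij i j` neighbours in `C j`,
(b) every vertex of `C` has exactly `|Cᵢ|/2` neighbours in `Cᵢ` and
(c) every vertex of `Cᵢ` has exactly `|C|/2` neighbours in `C`,
then `X` and the switched graph `X^π` are degree similar. -/
theorem localSwitching_degreeSimilar {V : Type*} [Fintype V] [DecidableEq V]
    (X : SimpleGraph V) (k : ℕ) (C : Fin k → Set V) (C0 : Set V)
    (hcover : ∀ x : V, x ∈ C0 ∨ ∃ i, x ∈ C i)
    (hdisj : ∀ i j, i ≠ j → Disjoint (C i) (C j))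
    (hdisj0 : ∀ i, Disjoint (C i) C0)
    (dij : Fin k → Fin k → ℕ)
    (ha : ∀ i j, ∀ x ∈ C i, (C j ∩ X.neighborSet x).ncard = dij i j)
    (hb : ∀ x ∈ C0, ∀ i, 2 * (C i ∩ X.neighborSet x).ncard = (C i).ncard)
    (hc : ∀ i, ∀ x ∈ C i, 2 * (C0 ∩ X.neighborSet x).ncard = C0.ncard) :
    DegreeSimilar X (switched X C0) := by
  obtain ⟨p, rfl, rfl⟩ := exists_option_index_of_partition hcover hdisj hdisj0
  exact degreeSimilar_of_adjMat_mul_blockReflection (cellIndex p)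
    (adjMat_mul_blockReflection_cellIndex X p ha hb) (gdeg_eq_of_cellIndex_eq X p ha hc)
end

section
/- Let X₁ and X₂ be degree-similar finite simple graphs on n vertices, and let Y₁ and Y₂ be degree-similar finite simple graphs on m vertices. Then the tensor products X₁ ⊗ Y₁ and X₂ ⊗ Y₂ are degree similar. -/
open Matrix

/-- The Cartesian product of graphs. -/
def cartProd {V W : Type*} (G : SimpleGraph V) (H : SimpleGraph W) :
    SimpleGraph (V × W) :=
  SimpleGraph.fromRel fun a b =>
    (a.1 = b.1 ∧ H.Adj a.2 b.2) ∨ (a.2 = b.2 ∧ G.Adj a.1 b.1)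

/-- The tensor product of graphs. -/
def tensorProd {V W : Type*} (G : SimpleGraph V) (H : SimpleGraph W) :
    SimpleGraph (V × W) :=
  SimpleGraph.fromRel fun a b => G.Adj a.1 b.1 ∧ H.Adj a.2 b.2

/-- The strong product of graphs. -/
def strongProd {V W : Type*} (G : SimpleGraph V) (H : SimpleGraph W) :
    SimpleGraph (V × W) :=
  SimpleGraph.fromRel fun a b =>
    (a.1 = b.1 ∧ H.Adj a.2 b.2) ∨ (a.2 = b.2 ∧ G.Adj a.1 b.1) ∨
      (G.Adj a.1 b.1 ∧ H.Adj a.2 b.2)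

/-- The lexicographic product of graphs. -/
def lexProd {V W : Type*} (G : SimpleGraph V) (H : SimpleGraph W) :
    SimpleGraph (V × W) :=
  SimpleGraph.fromRel fun a b =>
    G.Adj a.1 b.1 ∨ (a.1 = b.1 ∧ H.Adj a.2 b.2)

/-! The adjacency and degree matrices of a tensor product are the Kronecker products of those of
the factors, so the Kronecker product of the two conjugating matrices conjugates both. -/

open Kronecker

lemma tensorProd_adj {V W : Type*} (G : SimpleGraph V) (H : SimpleGraph W) (x y : V × W) :
    (tensorProd G H).Adj x y ↔ G.Adj x.1 y.1 ∧ H.Adj x.2 y.2 := by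
  simp only [tensorProd, SimpleGraph.fromRel_adj]
  constructor
  · rintro ⟨-, h | h⟩
    · exact h
    · exact ⟨h.1.symm, h.2.symm⟩
  · rintro ⟨h₁, h₂⟩
    exact ⟨fun hxy => G.ne_of_adj h₁ (congrArg Prod.fst hxy), Or.inl ⟨h₁, h₂⟩⟩

lemma neighborSet_tensorProd {V W : Type*} (G : SimpleGraph V) (H : SimpleGraph W) (x : V × W) :
    (tensorProd G H).neighborSet x = G.neighborSet x.1 ×ˢ H.neighborSet x.2 := by
  ext y
  exact tensorProd_adj G H x y

lemma adjMat_tensorProd {V W : Type*} (G : SimpleGraph V) (H : SimpleGraph W) :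
    adjMat (tensorProd G H) = adjMat G ⊗ₖ adjMat H := by
  ext x y
  simp only [adjMat, kroneckerMap_apply, of_apply]
  split_ifs <;> simp_all [tensorProd_adj]

lemma gdeg_tensorProd {V W : Type*} (G : SimpleGraph V) (H : SimpleGraph W) (x : V × W) :
    gdeg (tensorProd G H) x = gdeg G x.1 * gdeg H x.2 := by
  rw [gdeg, gdeg, gdeg, neighborSet_tensorProd, Nat.card_congr (Equiv.Set.prod _ _),
    Nat.card_prod]

lemma degMat_tensorProd {V W : Type*} [DecidableEq V] [DecidableEq W]
    (G : SimpleGraph V) (H : SimpleGraph W) :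
    degMat (tensorProd G H) = degMat G ⊗ₖ degMat H := by
  simp only [degMat, diagonal_kronecker_diagonal, gdeg_tensorProd, Nat.cast_mul]

lemma inv_mul_kronecker_mul {m n R : Type*} [Fintype m] [Fintype n] [DecidableEq m]
    [DecidableEq n] [CommRing R] (M A : Matrix m m R) (N B : Matrix n n R) :
    (M ⊗ₖ N)⁻¹ * (A ⊗ₖ B) * (M ⊗ₖ N) = (M⁻¹ * A * M) ⊗ₖ (N⁻¹ * B * N) := by
  rw [inv_kronecker, mul_kronecker_mul, mul_kronecker_mul]

/-- Degree-similar factors give degree-similar tensor products. -/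
theorem degreeSimilar_tensorProd {V W : Type*} [Fintype V] [Fintype W]
    [DecidableEq V] [DecidableEq W]
    (X₁ X₂ : SimpleGraph V) (Y₁ Y₂ : SimpleGraph W)
    (hX : DegreeSimilar X₁ X₂) (hY : DegreeSimilar Y₁ Y₂)  :
    DegreeSimilar (tensorProd X₁ Y₁) (tensorProd X₂ Y₂) := by
  obtain ⟨e, M, hM, hAX, hDX⟩ := hX
  obtain ⟨f, N, hN, hAY, hDY⟩ := hY
  refine ⟨e.prodCongr f, M ⊗ₖ N, hM.kronecker hN, ?_, ?_⟩
  · rw [adjMat_tensorProd, adjMat_tensorProd, inv_mul_kronecker_mul, hAX, hAY,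
      kroneckerMap_submatrix_submatrix]
    rfl
  · rw [degMat_tensorProd, degMat_tensorProd, inv_mul_kronecker_mul, hDX, hDY,
      kroneckerMap_submatrix_submatrix]
    rfl
end

section
/- Let X₁ and X₂ be degree-similar finite simple graphs on n vertices, and let Y₁ and Y₂ be degree-similar finite simple graphs on m vertices. Then the strong products X₁ ⊠ Y₁ and X₂ ⊠ Y₂ are degree similar. -/
/-!
Closed neighbourhoods in `X ⊠ Y` are products of closed neighbourhoods, so the adjacency and the
degree matrix of `X ⊠ Y` arise from those of the factors by one and the same operation
`(A, B) ↦ (A + 1) ⊗ (B + 1) - 1`. Conjugation by `M ⊗ N` commutes with this operation, hence the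
Kronecker product of the two similarity matrices witnesses the degree similarity of the products.
-/

open Matrix

open Kronecker

namespace Matrix

variable {R m n : Type*} [CommRing R] [DecidableEq m] [DecidableEq n]

theorem submatrix_kronecker_add_one_sub_one {m' n' : Type*} [DecidableEq m'] [DecidableEq n']
    (A : Matrix m' m' R) (B : Matrix n' n' R) (e : m ≃ m') (f : n ≃ n') :
    ((A + 1) ⊗ₖ (B + 1) - 1).submatrix (e.prodCongr f) (e.prodCongr f) =
      (A.submatrix e e + 1) ⊗ₖ (B.submatrix f f + 1) - 1 := by
  ext ⟨a, b⟩ ⟨c, d⟩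
  simp [one_apply, Prod.ext_iff]

variable [Fintype m] [Fintype n]

theorem inv_kronecker_mul_kronecker_mul (M A : Matrix m m R) (N B : Matrix n n R) :
    (M ⊗ₖ N)⁻¹ * (A ⊗ₖ B) * (M ⊗ₖ N) = (M⁻¹ * A * M) ⊗ₖ (N⁻¹ * B * N) := by
  rw [inv_kronecker, ← mul_kronecker_mul, ← mul_kronecker_mul]

theorem inv_mul_add_one_mul {M : Matrix m m R} (hM : IsUnit M) (A : Matrix m m R) :
    M⁻¹ * (A + 1) * M = M⁻¹ * A * M + 1 := by
  rw [mul_add, add_mul, mul_one, nonsing_inv_mul _ ((isUnit_iff_isUnit_det M).mp hM)]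

theorem inv_mul_sub_one_mul {M : Matrix m m R} (hM : IsUnit M) (A : Matrix m m R) :
    M⁻¹ * (A - 1) * M = M⁻¹ * A * M - 1 := by
  rw [mul_sub, sub_mul, mul_one, nonsing_inv_mul _ ((isUnit_iff_isUnit_det M).mp hM)]

theorem inv_mul_kronecker_add_one_sub_one_mul {m' n' : Type*} [DecidableEq m'] [DecidableEq n']
    {M : Matrix m m R} {N : Matrix n n R} (hM : IsUnit M) (hN : IsUnit N)
    {A : Matrix m m R} {B : Matrix n n R} {A' : Matrix m' m' R} {B' : Matrix n' n' R}
    (e : m ≃ m') (f : n ≃ n')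
    (hA : M⁻¹ * A * M = A'.submatrix e e) (hB : N⁻¹ * B * N = B'.submatrix f f) :
    (M ⊗ₖ N)⁻¹ * ((A + 1) ⊗ₖ (B + 1) - 1) * (M ⊗ₖ N) =
      ((A' + 1) ⊗ₖ (B' + 1) - 1).submatrix (e.prodCongr f) (e.prodCongr f) := by
  rw [inv_mul_sub_one_mul (hM.kronecker hN), inv_kronecker_mul_kronecker_mul,
    inv_mul_add_one_mul hM, inv_mul_add_one_mul hN, hA, hB,
    submatrix_kronecker_add_one_sub_one]

end Matrix

namespace SimpleGraph

variable {V W : Type*}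

theorem strongProd_adj {G : SimpleGraph V} {H : SimpleGraph W} {x y : V × W} :
    (strongProd G H).Adj x y ↔
      x ≠ y ∧ (G.Adj x.1 y.1 ∨ x.1 = y.1) ∧ (H.Adj x.2 y.2 ∨ x.2 = y.2) := by
  obtain ⟨a, b⟩ := x
  obtain ⟨c, d⟩ := y
  simp only [strongProd, fromRel_adj, ne_eq, Prod.mk.injEq, G.adj_comm c a, H.adj_comm d b,
    eq_comm (a := c), eq_comm (a := d)]
  tauto

section DecidableEq

variable [DecidableEq V] [DecidableEq W]

open Classical in
theorem adjMat_add_one_apply (G : SimpleGraph V) (v w : V) :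
    (adjMat G + 1) v w = if G.Adj v w ∨ v = w then 1 else 0 := by
  by_cases h : v = w
  · subst h
    simp [adjMat]
  · simp [adjMat, h]

theorem adjMat_strongProd (G : SimpleGraph V) (H : SimpleGraph W) :
    adjMat (strongProd G H) = (adjMat G + 1) ⊗ₖ (adjMat H + 1) - 1 := by
  ext x y
  simp only [Matrix.sub_apply, kroneckerMap_apply, adjMat_add_one_apply, one_apply]
  simp only [adjMat, of_apply]
  split_ifs <;> simp_all [strongProd_adj, Prod.ext_iff]

theorem degMat_add_one (G : SimpleGraph V) :
    degMat G + 1 = diagonal fun v => (gdeg G v : ℝ) + 1 := by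
  rw [degMat, ← diagonal_one, diagonal_add]

end DecidableEq

variable [Fintype V] [Fintype W]

theorem natCast_gdeg_eq_sum_adjMat (G : SimpleGraph V) (v : V) :
    (gdeg G v : ℝ) = ∑ w, adjMat G v w := by
  classical
  simp only [gdeg, Nat.card_eq_fintype_card, Fintype.card_ofFinset, mem_neighborSet, adjMat,
    of_apply, Finset.sum_boole]

variable [DecidableEq V] [DecidableEq W]

theorem sum_adjMat_add_one_apply (G : SimpleGraph V) (v : V) :
    ∑ w, (adjMat G + 1) v w = gdeg G v + 1 := by
  simp [Finset.sum_add_distrib, natCast_gdeg_eq_sum_adjMat, one_apply]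

theorem natCast_gdeg_strongProd (G : SimpleGraph V) (H : SimpleGraph W) (a : V) (b : W) :
    (gdeg (strongProd G H) (a, b) : ℝ) = (gdeg G a + 1) * (gdeg H b + 1) - 1 := by
  rw [natCast_gdeg_eq_sum_adjMat, adjMat_strongProd, ← sum_adjMat_add_one_apply,
    ← sum_adjMat_add_one_apply, Finset.sum_mul_sum]
  simp [Fintype.sum_prod_type, Finset.sum_sub_distrib, one_apply]

theorem degMat_strongProd (G : SimpleGraph V) (H : SimpleGraph W) :
    degMat (strongProd G H) = (degMat G + 1) ⊗ₖ (degMat H + 1) - 1 := by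
  rw [degMat_add_one, degMat_add_one, diagonal_kronecker_diagonal, ← diagonal_one,
    diagonal_sub, degMat]
  congr 1
  funext ⟨a, b⟩
  exact natCast_gdeg_strongProd G H a b

end SimpleGraph

/-- Degree-similar factors give degree-similar strong products. -/
theorem degreeSimilar_strongProd {V W : Type*} [Fintype V] [Fintype W]
    [DecidableEq V] [DecidableEq W]
    (X₁ X₂ : SimpleGraph V) (Y₁ Y₂ : SimpleGraph W)
    (hX : DegreeSimilar X₁ X₂) (hY : DegreeSimilar Y₁ Y₂)  :
    DegreeSimilar (strongProd X₁ Y₁) (strongProd X₂ Y₂) := by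
  obtain ⟨e, M, hM, hAX, hDX⟩ := hX
  obtain ⟨f, N, hN, hAY, hDY⟩ := hY
  refine ⟨e.prodCongr f, M ⊗ₖ N, hM.kronecker hN, ?_, ?_⟩
  · rw [SimpleGraph.adjMat_strongProd, SimpleGraph.adjMat_strongProd]
    exact Matrix.inv_mul_kronecker_add_one_sub_one_mul hM hN e f hAX hAY
  · rw [SimpleGraph.degMat_strongProd, SimpleGraph.degMat_strongProd]
    exact Matrix.inv_mul_kronecker_add_one_sub_one_mul hM hN e f hDX hDY
end

section
/- Let X₁ and X₂ be degree-similar finite simple graphs, let d₁,…,d_k be the distinct vertex degrees occurring in X₁, and fix natural numbers s₁,…,s_k. For i ∈ {1,2} let Γᵢ be the graph obtained from Xᵢ by attaching, for each j ∈ {1,…,k}, exactly s_j new pendant vertices to every vertex of degree d_j (each new vertex is adjacent only to the vertex it is attached to). Then Γ₁ and Γ₂ are degree similar. -/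
/-!
Degree similarity is equivalent to the existence of a rectangular matrix `P`, invertible with
inverse `Q`, that intertwines the adjacency matrices and the degree matrices: the bijection of
vertex sets can always be chosen afterwards, because `trace (P * Q) = trace (Q * P)` forces the
vertex sets to have the same size. Intertwining the diagonal degree matrices means that
`P v w ≠ 0` only when `v` and `w` have the same degree, hence carry the same number of pendants.
Copying each entry `P v w` to every pair formed by the `i`-th pendant of `v` and the `i`-th
pendant of `w` gives a matrix `P̃`, and `diag(P, P̃)` intertwines the adjacency and degree
matrices of the two enlarged graphs, with inverse `diag(Q, Q̃)`.
-/

open Matrix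

/-- The graph obtained from `X` by attaching `t v` new pendant vertices to each
vertex `v` of `X`. -/
def addPendants {V : Type*} (X : SimpleGraph V) (t : V → ℕ) :
    SimpleGraph (V ⊕ Σ v : V, Fin (t v)) :=
  SimpleGraph.fromRel fun a b =>
    match a, b with
    | Sum.inl a, Sum.inl b => X.Adj a b
    | Sum.inl a, Sum.inr b => a = b.1
    | _, _ => False

lemma Matrix.submatrix_mul_mul {R U V W X Y : Type*} [NonUnitalNonAssocSemiring R] [Fintype V]
    (Q : Matrix U V R) (A : Matrix V V R) (P : Matrix V W R) (f : X → U) (g : Y → W) :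
    (Q * A * P).submatrix f g = Q.submatrix f id * A * P.submatrix id g := by
  rw [submatrix_mul _ _ _ id _ Function.bijective_id,
    submatrix_mul _ _ _ id _ Function.bijective_id, submatrix_id_id]

lemma Matrix.card_eq_of_mul_eq_one {R V W : Type*} [CommSemiring R] [CharZero R] [Fintype V]
    [Fintype W] [DecidableEq V] [DecidableEq W] {P : Matrix V W R} {Q : Matrix W V R}
    (hPQ : P * Q = 1) (hQP : Q * P = 1) : Fintype.card V = Fintype.card W := by
  have := congrArg trace hQP
  rwa [trace_mul_comm, hPQ, trace_one, trace_one, Nat.cast_inj] at this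

lemma Matrix.diagonal_mul_eq_mul_diagonal_iff {R V W : Type*} [CommRing R] [NoZeroDivisors R]
    [Fintype V] [Fintype W] [DecidableEq V] [DecidableEq W] {f : V → R} {g : W → R}
    {P : Matrix V W R} :
    diagonal f * P = P * diagonal g ↔ ∀ v w, P v w ≠ 0 → f v = g w := by
  simp only [← Matrix.ext_iff, diagonal_mul, mul_diagonal, mul_comm (P _ _) (g _),
    mul_eq_mul_right_iff]
  exact forall₂_congr fun _ _ => or_iff_not_imp_right

section Intertwining

variable {R V W : Type*} [Semiring R] [Fintype V] [Fintype W] [DecidableEq V] [DecidableEq W]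

lemma Matrix.mul_eq_mul_of_mul_eq_one {P : Matrix V W R} {Q : Matrix W V R}
    (hPQ : P * Q = 1) (hQP : Q * P = 1) {A : Matrix V V R} {B : Matrix W W R}
    (h : A * P = P * B) : B * Q = Q * A :=
  calc B * Q = Q * P * B * Q := by rw [hQP, Matrix.one_mul]
    _ = Q * (A * P) * Q := by rw [h, Matrix.mul_assoc Q]
    _ = Q * A := by rw [Matrix.mul_assoc, Matrix.mul_assoc, hPQ, Matrix.mul_one]

lemma Matrix.mul_mul_eq_iff_mul_eq_mul {P : Matrix V W R} {Q : Matrix W V R}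
    (hPQ : P * Q = 1) (hQP : Q * P = 1) (A : Matrix V V R) (B : Matrix W W R) :
    Q * A * P = B ↔ A * P = P * B := by
  constructor
  · rintro rfl
    rw [← Matrix.mul_assoc, ← Matrix.mul_assoc, hPQ, Matrix.one_mul]
  · intro h
    rw [Matrix.mul_assoc, h, ← Matrix.mul_assoc, hQP, Matrix.one_mul]

end Intertwining

lemma degreeSimilar_iff_exists_intertwining {V W : Type*} [Fintype V] [Fintype W] [DecidableEq V]
    [DecidableEq W] (G : SimpleGraph V) (H : SimpleGraph W) :
    DegreeSimilar G H ↔ ∃ (P : Matrix V W ℝ) (Q : Matrix W V ℝ), P * Q = 1 ∧ Q * P = 1 ∧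
      adjMat G * P = P * adjMat H ∧ degMat G * P = P * degMat H := by
  constructor
  · rintro ⟨e, M, hM, hA, hD⟩
    have hdet : IsUnit M.det := (isUnit_iff_isUnit_det M).1 hM
    have hPQ : M.submatrix id e.symm * M⁻¹.submatrix e.symm id = 1 := by
      rw [← submatrix_mul _ _ _ _ _ e.symm.bijective, mul_nonsing_inv M hdet, submatrix_id_id]
    have hQP : M⁻¹.submatrix e.symm id * M.submatrix id e.symm = 1 := by
      rw [← submatrix_mul _ _ _ _ _ Function.bijective_id, nonsing_inv_mul M hdet,
        submatrix_one_equiv]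
    have conj : ∀ (A : Matrix V V ℝ) (B : Matrix W W ℝ), M⁻¹ * A * M = B.submatrix e e →
        A * M.submatrix id e.symm = M.submatrix id e.symm * B := by
      intro A B h
      rw [← mul_mul_eq_iff_mul_eq_mul hPQ hQP, ← submatrix_mul_mul, h, submatrix_submatrix]
      simp
    exact ⟨_, _, hPQ, hQP, conj _ _ hA, conj _ _ hD⟩
  · rintro ⟨P, Q, hPQ, hQP, hA, hD⟩
    let e : V ≃ W := Fintype.equivOfCardEq (card_eq_of_mul_eq_one hPQ hQP)
    have hMN : P.submatrix id e * Q.submatrix e id = 1 := by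
      rw [← submatrix_mul _ _ _ _ _ e.bijective, hPQ, submatrix_id_id]
    have hNM : Q.submatrix e id * P.submatrix id e = 1 := by
      rw [← submatrix_mul _ _ _ _ _ Function.bijective_id, hQP, submatrix_one_equiv]
    have conj : ∀ (A : Matrix V V ℝ) (B : Matrix W W ℝ), A * P = P * B →
        (P.submatrix id e)⁻¹ * A * P.submatrix id e = B.submatrix e e := by
      intro A B h
      rw [inv_eq_right_inv hMN, ← submatrix_mul_mul, (mul_mul_eq_iff_mul_eq_mul hPQ hQP A B).2 h]
    exact ⟨e, P.submatrix id e, ⟨⟨_, _, hMN, hNM⟩, rfl⟩, conj _ _ hA, conj _ _ hD⟩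

namespace addPendants

variable {V : Type*} (X : SimpleGraph V) (t : V → ℕ)

@[simp] lemma adj_inl_inl (a b : V) :
    (addPendants X t).Adj (Sum.inl a) (Sum.inl b) ↔ X.Adj a b := by
  simp only [addPendants, SimpleGraph.fromRel_adj]
  exact ⟨fun ⟨_, h⟩ => h.elim id (X.adj_symm ·),
    fun h => ⟨by simpa using h.ne, .inl h⟩⟩

@[simp] lemma adj_inl_inr (a : V) (q : Σ v, Fin (t v)) :
    (addPendants X t).Adj (Sum.inl a) (Sum.inr q) ↔ a = q.1 := by
  simp [addPendants]

@[simp] lemma adj_inr_inl (q : Σ v, Fin (t v)) (b : V) :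
    (addPendants X t).Adj (Sum.inr q) (Sum.inl b) ↔ b = q.1 := by
  rw [SimpleGraph.adj_comm, adj_inl_inr]

@[simp] lemma not_adj_inr_inr (q r : Σ v, Fin (t v)) :
    ¬ (addPendants X t).Adj (Sum.inr q) (Sum.inr r) := by
  simp [addPendants]

lemma neighborSet_inl (v : V) :
    (addPendants X t).neighborSet (Sum.inl v) =
      Sum.inl '' X.neighborSet v ∪
        Sum.inr '' Set.range (Sigma.mk (β := fun v => Fin (t v)) v) := by
  ext (u | q) <;> simp [eq_comm]

lemma neighborSet_inr (q : Σ v, Fin (t v)) :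
    (addPendants X t).neighborSet (Sum.inr q) = {Sum.inl q.1} := by
  ext (u | r) <;> simp

lemma gdeg_inl [Finite V] (v : V) : gdeg (addPendants X t) (Sum.inl v) = gdeg X v + t v := by
  rw [gdeg, neighborSet_inl, Nat.card_coe_set_eq, Set.ncard_union_eq,
    Set.ncard_image_of_injective _ Sum.inl_injective,
    Set.ncard_image_of_injective _ Sum.inr_injective,
    Set.ncard_range_of_injective sigma_mk_injective, gdeg, Nat.card_coe_set_eq,
    Nat.card_eq_fintype_card, Fintype.card_fin]
  rw [Set.disjoint_iff_forall_ne]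
  rintro _ ⟨_, _, rfl⟩ _ ⟨_, _, rfl⟩
  simp

lemma gdeg_inr (q : Σ v, Fin (t v)) : gdeg (addPendants X t) (Sum.inr q) = 1 := by
  simp [gdeg, neighborSet_inr]

end addPendants

open Classical in
noncomputable def pendantIncidence {V : Type*} (t : V → ℕ) : Matrix V (Σ v, Fin (t v)) ℝ :=
  of fun x q => if x = q.1 then 1 else 0

open Classical in
lemma adjMat_addPendants {V : Type*} (X : SimpleGraph V) (t : V → ℕ) :
    adjMat (addPendants X t) =
      fromBlocks (adjMat X) (pendantIncidence t) (pendantIncidence t)ᵀ 0 := by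
  ext (a | q) (b | r) <;> simp [adjMat, pendantIncidence]

lemma degMat_addPendants {V : Type*} [Finite V] [DecidableEq V] (X : SimpleGraph V)
    (t : V → ℕ) :
    degMat (addPendants X t) = fromBlocks (degMat X + diagonal fun v => (t v : ℝ)) 0 0 1 := by
  ext (a | q) (b | r) <;>
    simp [degMat, diagonal_apply, one_apply, addPendants.gdeg_inl, addPendants.gdeg_inr]

section PendantLift

variable {R U V W : Type*} [Semiring R] {t₁ : U → ℕ} {t₂ : V → ℕ} {t₃ : W → ℕ}

noncomputable def pendantLift (t₁ : U → ℕ) (t₂ : V → ℕ) (P : Matrix U V R) :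
    Matrix (Σ u, Fin (t₁ u)) (Σ v, Fin (t₂ v)) R :=
  of fun p q => if (p.2 : ℕ) = q.2 then P p.1 q.1 else 0

lemma sum_pendantLift_mul [Fintype V] {P : Matrix U V R}
    (hP : ∀ u v, P u v ≠ 0 → t₁ u = t₂ v) (p : Σ u, Fin (t₁ u)) (G : V → ℕ → R) :
    ∑ q : Σ v, Fin (t₂ v), pendantLift t₁ t₂ P p q * G q.1 q.2 =
      ∑ v, P p.1 v * G v p.2 := by
  rw [Fintype.sum_sigma]
  refine Finset.sum_congr rfl fun v _ => ?_
  simp only [pendantLift, of_apply, ite_mul, zero_mul]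
  rw [Fin.sum_univ_eq_sum_range (fun l => if (p.2 : ℕ) = l then P p.1 v * G v l else 0),
    Finset.sum_ite_eq]
  split_ifs with h
  · rfl
  · rw [not_not.1 fun hne => h (Finset.mem_range.2 (hP _ _ hne ▸ p.2.2)), zero_mul]

lemma pendantLift_mul [Fintype V] {P : Matrix U V R} (hP : ∀ u v, P u v ≠ 0 → t₁ u = t₂ v)
    (Q : Matrix V W R) :
    pendantLift t₁ t₂ P * pendantLift t₂ t₃ Q = pendantLift t₁ t₃ (P * Q) := by
  ext p r
  refine (sum_pendantLift_mul hP p fun w l => if l = r.2 then Q w r.1 else 0).trans ?_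
  simp only [pendantLift, of_apply, mul_apply]
  split_ifs <;> simp

lemma pendantLift_one [DecidableEq V] (t : V → ℕ) : pendantLift t t (1 : Matrix V V R) = 1 := by
  ext ⟨v, i⟩ ⟨w, l⟩
  rcases eq_or_ne v w with rfl | hvw
  · simp [pendantLift, one_apply, Fin.val_inj]
  · simp [pendantLift, one_apply, hvw]

lemma pendantLift_transpose (P : Matrix U V R) :
    (pendantLift t₁ t₂ P)ᵀ = pendantLift t₂ t₁ Pᵀ := by
  ext q p
  simp [pendantLift, eq_comm]

end PendantLift

section PendantIncidence

variable {V W : Type*} [Fintype V] [Fintype W] [DecidableEq V] [DecidableEq W]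
  {t₁ : V → ℕ} {t₂ : W → ℕ} {P : Matrix V W ℝ}

lemma pendantIncidence_transpose_mul (hP : ∀ v w, P v w ≠ 0 → t₁ v = t₂ w) :
    (pendantIncidence t₁)ᵀ * P = pendantLift t₁ t₂ P * (pendantIncidence t₂)ᵀ := by
  ext p y
  rw [mul_apply, mul_apply]
  convert (sum_pendantLift_mul hP p fun w _ => if y = w then 1 else 0).symm using 1 <;>
    simp [pendantIncidence]

lemma pendantIncidence_mul_pendantLift (hP : ∀ v w, P v w ≠ 0 → t₁ v = t₂ w) :
    pendantIncidence t₁ * pendantLift t₁ t₂ P = P * pendantIncidence t₂ := by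
  have := pendantIncidence_transpose_mul (P := Pᵀ) fun w v h => (hP v w h).symm
  simpa [transpose_mul, pendantLift_transpose] using congrArg transpose this.symm

end PendantIncidence

theorem DegreeSimilar.addPendants {V W : Type*} [Fintype V] [Fintype W] [DecidableEq V]
    [DecidableEq W] {X₁ : SimpleGraph V} {X₂ : SimpleGraph W} (h : DegreeSimilar X₁ X₂)
    {t₁ : V → ℕ} {t₂ : W → ℕ}
    (ht : ∀ v w, gdeg X₁ v = gdeg X₂ w → t₁ v = t₂ w) :
    DegreeSimilar (addPendants X₁ t₁) (addPendants X₂ t₂) := by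
  obtain ⟨P, Q, hPQ, hQP, hA, hD⟩ := (degreeSimilar_iff_exists_intertwining X₁ X₂).1 h
  have hT : (diagonal fun v => (t₁ v : ℝ)) * P = P * diagonal fun w => (t₂ w : ℝ) :=
    diagonal_mul_eq_mul_diagonal_iff.2 fun v w hvw =>
      congrArg Nat.cast (ht v w (by exact_mod_cast diagonal_mul_eq_mul_diagonal_iff.1 hD v w hvw))
  have hP : ∀ v w, P v w ≠ 0 → t₁ v = t₂ w := fun v w hvw => by
    exact_mod_cast diagonal_mul_eq_mul_diagonal_iff.1 hT v w hvw
  have hQ : ∀ w v, Q w v ≠ 0 → t₂ w = t₁ v := fun w v hwv => by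
    exact_mod_cast
      diagonal_mul_eq_mul_diagonal_iff.1 (mul_eq_mul_of_mul_eq_one hPQ hQP hT) w v hwv
  refine (degreeSimilar_iff_exists_intertwining _ _).2
    ⟨fromBlocks P 0 0 (pendantLift t₁ t₂ P), fromBlocks Q 0 0 (pendantLift t₂ t₁ Q),
      ?_, ?_, ?_, ?_⟩
  · simp [fromBlocks_multiply, hPQ, pendantLift_mul hP, pendantLift_one]
  · simp [fromBlocks_multiply, hQP, pendantLift_mul hQ, pendantLift_one]
  · simp [adjMat_addPendants, fromBlocks_multiply, hA, pendantIncidence_mul_pendantLift hP,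
      pendantIncidence_transpose_mul hP]
  · simp [degMat_addPendants, fromBlocks_multiply, Matrix.add_mul, Matrix.mul_add, hD, hT]

theorem degreeSimilar_addPendants_general {V : Type*} [Fintype V] [DecidableEq V] {k : ℕ}
    (X₁ X₂ : SimpleGraph V) (h : DegreeSimilar X₁ X₂)
    (d : Fin k → ℕ)
    (hall : ∀ x : V, ∃ j, gdeg X₁ x = d j)
    (s : Fin k → ℕ) (t₁ t₂ : V → ℕ)
    (ht₁ : ∀ (x : V) (j : Fin k), gdeg X₁ x = d j → t₁ x = s j)
    (ht₂ : ∀ (x : V) (j : Fin k), gdeg X₂ x = d j → t₂ x = s j) :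
    DegreeSimilar (addPendants X₁ t₁) (addPendants X₂ t₂) := by
  refine h.addPendants fun v w hvw => ?_
  obtain ⟨j, hj⟩ := hall v
  rw [ht₁ v j hj, ht₂ w j (hvw ▸ hj)]

/-- Let `X₁, X₂` be degree similar, let `d 0, …, d (k-1)` be the distinct degrees
occurring in `X₁`, and fix `s : Fin k → ℕ`.  Attaching `s j` pendant vertices to every
vertex of degree `d j` (in `X₁` for `Γ₁`, in `X₂` for `Γ₂`) yields degree-similar
graphs. -/
theorem degreeSimilar_addPendants {V : Type*} [Fintype V] [DecidableEq V] {k : ℕ}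
    (X₁ X₂ : SimpleGraph V) (h : DegreeSimilar X₁ X₂)
    (d : Fin k → ℕ) (hinj : Function.Injective d)
    (hall : ∀ x : V, ∃ j, gdeg X₁ x = d j)
    (hocc : ∀ j, ∃ x : V, gdeg X₁ x = d j)
    (s : Fin k → ℕ) (t₁ t₂ : V → ℕ)
    (ht₁ : ∀ (x : V) (j : Fin k), gdeg X₁ x = d j → t₁ x = s j)
    (ht₂ : ∀ (x : V) (j : Fin k), gdeg X₂ x = d j → t₂ x = s j) :
    DegreeSimilar (addPendants X₁ t₁) (addPendants X₂ t₂) :=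
  degreeSimilar_addPendants_general X₁ X₂ h d hall s t₁ t₂ ht₁ ht₂
end
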